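/- Let C ⊆ ℝ² be open and convex, and let f : C → ℝ be convex and Lipschitz with constant L. Let A ⊆ ℝ, let g : A → ℝ be a bounded function with (x, g(x)) ∈ C for every x ∈ A, suppose the function x ↦ f(x, g(x)) is bounded on A, and fix y ∈ ℝ. Suppose that for every x ∈ A there exists p_x ∈ ℝ such that (p_x, y) ∈ ∂f(x, g(x)) (note that necessarily |p_x| ≤ L). Then the function ω(x) := f(x, g(x)) − y·g(x), x ∈ A, extends to a Lipschitz convex function on ℝ; namely, c(t) := sup{ω(x) + p_x(t − x) : x ∈ A}, t ∈ ℝ, is a Lipschitz convex function on ℝ with c(x) = ω(x) for every x ∈ A. -/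

import Mathlib

/-!
Testing the subgradient `(p_x, y)` at `(x, g x)` against the graph point `(x', g x')` gives
`ω x + p_x (x' - x) ≤ ω x'`: the affine functions `t ↦ ω x + p_x (t - x)` all lie below `ω` on `A`
and touch it at their anchor, so their upper envelope `c` agrees with `ω` on `A`. Since `C` is
open and `f` is `L`-Lipschitz, every subgradient has norm at most `L`, so all slopes satisfy
`|p_x| ≤ L`; an upper envelope of affine functions with slopes in `[-L, L]` is finite, convex and
`L`-Lipschitz.
-/

open Set
open scoped RealInnerProductSpace

noncomputable section

/-- The subdifferential of `f` at `x` relative to the set `C`. -/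
def subdiff (C : Set (EuclideanSpace ℝ (Fin 2)))
    (f : EuclideanSpace ℝ (Fin 2) → ℝ) (x : EuclideanSpace ℝ (Fin 2)) :
    Set (EuclideanSpace ℝ (Fin 2)) :=
  {v | ∀ y ∈ C, f x + ⟪v, y - x⟫ ≤ f y}

/-- The point `(a, b)` of `ℝ²`. -/
def mk2 (a b : ℝ) : EuclideanSpace ℝ (Fin 2) :=
  (WithLp.equiv 2 (Fin 2 → ℝ)).symm ![a, b]

lemma inner_mk2_sub (a b c d e h : ℝ) :
    ⟪mk2 a b, mk2 c d - mk2 e h⟫ = a * (c - e) + b * (d - h) := by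
  simp [mk2, EuclideanSpace.inner_eq_star_dotProduct]
  ring

lemma abs_le_norm_mk2 (a b : ℝ) : |a| ≤ ‖mk2 a b‖ := by
  simpa [mk2] using PiLp.norm_apply_le (mk2 a b) 0

lemma norm_le_of_mem_subdiff {C : Set (EuclideanSpace ℝ (Fin 2))}
    {f : EuclideanSpace ℝ (Fin 2) → ℝ} {L : NNReal} {z v : EuclideanSpace ℝ (Fin 2)}
    (hC : IsOpen C) (hf : LipschitzOnWith L f C) (hz : z ∈ C) (hv : v ∈ subdiff C f z) :
    ‖v‖ ≤ L := by
  rcases eq_or_ne v 0 with rfl | hv0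
  · simp
  obtain ⟨ε, hε, hball⟩ := Metric.isOpen_iff.1 hC z hz
  have hv_pos : 0 < ‖v‖ := norm_pos_iff.2 hv0
  set t := ε / (2 * ‖v‖)
  have ht : 0 < t := by positivity
  have hstep : ‖t • v‖ = t * ‖v‖ := by rw [norm_smul, Real.norm_of_nonneg ht.le]
  have htv : t * ‖v‖ = ε / 2 := by
    rw [div_mul_eq_mul_div, mul_div_mul_right _ _ hv_pos.ne']
  have hw : z + t • v ∈ C := hball <| by
    rw [Metric.mem_ball, dist_self_add_left, hstep, htv]
    linarith
  have hgain : t * ‖v‖ ^ 2 ≤ f (z + t • v) - f z := by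
    have := hv _ hw
    rw [add_sub_cancel_left, inner_smul_right, real_inner_self_eq_norm_sq] at this
    linarith
  have hcost : f (z + t • v) - f z ≤ L * (t * ‖v‖) := by
    have := hf.dist_le_mul _ hw _ hz
    rw [Real.dist_eq, dist_self_add_left, hstep] at this
    exact (le_abs_self _).trans this
  have : (t * ‖v‖) * ‖v‖ ≤ (t * ‖v‖) * L := by linarith
  exact le_of_mul_le_mul_left this (by positivity)

lemma tangent_le_of_mk2_mem_subdiff {C : Set (EuclideanSpace ℝ (Fin 2))}
    {f : EuclideanSpace ℝ (Fin 2) → ℝ} {x b u y x' b' : ℝ}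
    (hv : mk2 u y ∈ subdiff C f (mk2 x b)) (hw : mk2 x' b' ∈ C) :
    f (mk2 x b) - y * b + u * (x' - x) ≤ f (mk2 x' b') - y * b' := by
  have := hv _ hw
  rw [inner_mk2_sub] at this
  linarith

lemma mul_le_mul_abs_of_abs_le {a s L : ℝ} (h : |a| ≤ L) : a * s ≤ L * |s| :=
  calc a * s ≤ |a| * |s| := (le_abs_self _).trans (abs_mul a s).le
    _ ≤ L * |s| := mul_le_mul_of_nonneg_right h (abs_nonneg s)

def tangentSup (A : Set ℝ) (ω p : ℝ → ℝ) (t : ℝ) : ℝ :=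
  sSup ((fun x => ω x + p x * (t - x)) '' A)

section tangentSup

variable {A : Set ℝ} {ω p : ℝ → ℝ}

lemma tangentSup_empty : tangentSup ∅ ω p = fun _ => 0 :=
  funext fun _ => by simp [tangentSup]

lemma bddAbove_tangents {L : ℝ} (hpL : ∀ x ∈ A, |p x| ≤ L)
    (hsupp : ∀ x ∈ A, ∀ x' ∈ A, ω x + p x * (x' - x) ≤ ω x') (t : ℝ) :
    BddAbove ((fun x => ω x + p x * (t - x)) '' A) := by
  rcases A.eq_empty_or_nonempty with rfl | ⟨a, ha⟩
  · simp
  refine ⟨ω a + L * |t - a|, ?_⟩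
  rintro _ ⟨x, hx, rfl⟩
  have hslope := mul_le_mul_abs_of_abs_le (s := t - a) (hpL x hx)
  linarith [hsupp x hx a ha]

lemma tangent_le_tangentSup (hbdd : ∀ t, BddAbove ((fun x => ω x + p x * (t - x)) '' A))
    {x : ℝ} (hx : x ∈ A) (t : ℝ) : ω x + p x * (t - x) ≤ tangentSup A ω p t :=
  le_csSup (hbdd t) ⟨x, hx, rfl⟩

lemma tangentSup_eq_of_mem (hsupp : ∀ x ∈ A, ∀ x' ∈ A, ω x + p x * (x' - x) ≤ ω x')
    {x : ℝ} (hx : x ∈ A) : tangentSup A ω p x = ω x := by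
  refine IsGreatest.csSup_eq ⟨⟨x, hx, by ring⟩, ?_⟩
  rintro _ ⟨x', hx', rfl⟩
  exact hsupp x' hx' x hx

lemma convexOn_tangentSup (hbdd : ∀ t, BddAbove ((fun x => ω x + p x * (t - x)) '' A)) :
    ConvexOn ℝ univ (tangentSup A ω p) := by
  rcases A.eq_empty_or_nonempty with rfl | hA
  · exact tangentSup_empty ▸ convexOn_const 0 convex_univ
  refine ⟨convex_univ, fun t₁ _ t₂ _ α β hα hβ hαβ => csSup_le (hA.image _) ?_⟩
  rintro _ ⟨x, hx, rfl⟩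
  have h₁ := mul_le_mul_of_nonneg_left (tangent_le_tangentSup hbdd hx t₁) hα
  have h₂ := mul_le_mul_of_nonneg_left (tangent_le_tangentSup hbdd hx t₂) hβ
  have hsplit : ω x + p x * (α * t₁ + β * t₂ - x)
      = α * (ω x + p x * (t₁ - x)) + β * (ω x + p x * (t₂ - x)) := by
    linear_combination (p x * x - ω x) * hαβ
  simp only [smul_eq_mul]
  linarith

lemma lipschitzWith_tangentSup {L : NNReal} (hpL : ∀ x ∈ A, |p x| ≤ L)
    (hbdd : ∀ t, BddAbove ((fun x => ω x + p x * (t - x)) '' A)) :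
    LipschitzWith L (tangentSup A ω p) := by
  rcases A.eq_empty_or_nonempty with rfl | hA
  · exact tangentSup_empty ▸ LipschitzWith.const' 0
  refine LipschitzWith.of_le_add_mul L fun u v => csSup_le (hA.image _) ?_
  rintro _ ⟨x, hx, rfl⟩
  have hslope := mul_le_mul_abs_of_abs_le (s := u - v) (hpL x hx)
  rw [← Real.dist_eq] at hslope
  linarith [tangent_le_tangentSup hbdd hx v]

end tangentSup

theorem convex_lipschitz_extension_general
    (C : Set (EuclideanSpace ℝ (Fin 2))) (hCopen : IsOpen C)
    (f : EuclideanSpace ℝ (Fin 2) → ℝ) (L : NNReal)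
    (hlip : LipschitzOnWith L f C)
    (A : Set ℝ) (g : ℝ → ℝ)
    (hgC : ∀ x ∈ A, mk2 x (g x) ∈ C)
    (y : ℝ) (p : ℝ → ℝ)
    (hp : ∀ x ∈ A, mk2 (p x) y ∈ subdiff C f (mk2 x (g x)))
    (ω c : ℝ → ℝ)
    (hω : ∀ x, ω x = f (mk2 x (g x)) - y * g x)
    (hc : ∀ t, c t = sSup ((fun x => ω x + p x * (t - x)) '' A)) :
    ConvexOn ℝ univ c ∧ (∃ K : NNReal, LipschitzWith K c) ∧ ∀ x ∈ A, c x = ω x := by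
  obtain rfl : c = tangentSup A ω p := funext hc
  have hpL : ∀ x ∈ A, |p x| ≤ L := fun x hx =>
    (abs_le_norm_mk2 _ y).trans (norm_le_of_mem_subdiff hCopen hlip (hgC x hx) (hp x hx))
  have hsupp : ∀ x ∈ A, ∀ x' ∈ A, ω x + p x * (x' - x) ≤ ω x' := fun x hx x' hx' => by
    simpa only [hω] using tangent_le_of_mk2_mem_subdiff (hp x hx) (hgC x' hx')
  have hbdd := bddAbove_tangents hpL hsupp
  exact ⟨convexOn_tangentSup hbdd, ⟨L, lipschitzWith_tangentSup hpL hbdd⟩,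
    fun x hx => tangentSup_eq_of_mem hsupp hx⟩

/-- If `f` is convex and `L`-Lipschitz on an open convex `C ⊆ ℝ²`, `g` is bounded on
`A ⊆ ℝ` with graph in `C`, `x ↦ f(x, g(x))` is bounded on `A`, and for each `x ∈ A`
there is `p_x` with `(p_x, y) ∈ ∂f(x, g(x))`, then `ω(x) := f(x, g(x)) - y g(x)` extends
to the Lipschitz convex function `c(t) = sup_{x ∈ A} (ω(x) + p_x (t - x))` on `ℝ`. -/
theorem convex_lipschitz_extension
    (C : Set (EuclideanSpace ℝ (Fin 2))) (hCopen : IsOpen C) (hCconv : Convex ℝ C)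
    (f : EuclideanSpace ℝ (Fin 2) → ℝ) (L : NNReal)
    (hconv : ConvexOn ℝ C f) (hlip : LipschitzOnWith L f C)
    (A : Set ℝ) (g : ℝ → ℝ)
    (hgbd : ∃ M : ℝ, ∀ x ∈ A, |g x| ≤ M)
    (hgC : ∀ x ∈ A, mk2 x (g x) ∈ C)
    (hfbd : ∃ M : ℝ, ∀ x ∈ A, |f (mk2 x (g x))| ≤ M)
    (y : ℝ) (p : ℝ → ℝ)
    (hp : ∀ x ∈ A, mk2 (p x) y ∈ subdiff C f (mk2 x (g x)))
    (ω c : ℝ → ℝ)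
    (hω : ∀ x, ω x = f (mk2 x (g x)) - y * g x)
    (hc : ∀ t, c t = sSup ((fun x => ω x + p x * (t - x)) '' A)) :
    ConvexOn ℝ univ c ∧ (∃ K : NNReal, LipschitzWith K c) ∧ ∀ x ∈ A, c x = ω x :=
  convex_lipschitz_extension_general C hCopen f L hlip A g hgC y p hp ω c hω hc
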